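/- arXiv:1212.5394 — 5 statements merged into one kernel-verified Lean document; each statement's English description precedes it below -/
import Mathlib

section
/- For a discrete energy-harvesting profile with arrival epochs 0 = t₁ < t₂ < ... < t_N < T and energies E₁,...,E_N > 0, the directional water-filling power levels are non-decreasing: if the DWF indices i₀ = 0 < i₁ < ... < i_{N^D} are defined iteratively by i_k = argmin over i with i_{k-1} < i ≤ N of (∑_{j=i_{k-1}+1}^{i} E_j)/(t_{i+1} − t_{i_{k-1}+1}) (with t_{N+1} := T), then the resulting power levels P_k = (∑_{j=i_{k-1}+1}^{i_k} E_j)/(t_{i_k+1} − t_{i_{k-1}+1}) satisfy P_1 ≤ P_2 ≤ ... ≤ P_{N^D}. -/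
open Finset

/-! Greedy minimality at step `k` compares the `k`-th level with the average power over the
union of the `k`-th and `(k+1)`-st intervals. That average is a mediant of the two levels, so
it can only be at least the first one if the second one is too. -/

theorem div_le_div_of_div_le_add_div_add {α : Type*} [Field α] [LinearOrder α]
    [IsStrictOrderedRing α] {a b c d : α} (hb : 0 < b) (hd : 0 < d)
    (h : a / b ≤ (a + c) / (b + d)) : a / b ≤ c / d := by
  rw [div_le_div_iff₀ hb (add_pos hb hd)] at h
  rw [div_le_div_iff₀ hb hd]
  linarith

theorem stmt2_general (N ND : ℕ) (t : ℕ → ℝ) (E : ℕ → ℝ)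
    (htmono : StrictMonoOn t (Set.Icc 1 (N + 1)))
    (idx : ℕ → ℕ)
    (hidx_mono : ∀ k ∈ Finset.Icc 1 ND, idx (k - 1) < idx k ∧ idx k ≤ N)
    (hmin : ∀ k ∈ Finset.Icc 1 ND, ∀ i, idx (k - 1) < i → i ≤ N →
      (∑ j ∈ Finset.Ioc (idx (k - 1)) (idx k), E j) / (t (idx k + 1) - t (idx (k - 1) + 1))
        ≤ (∑ j ∈ Finset.Ioc (idx (k - 1)) i, E j) / (t (i + 1) - t (idx (k - 1) + 1))) :
    ∀ k ∈ Finset.Icc 1 (ND - 1),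
      (∑ j ∈ Finset.Ioc (idx (k - 1)) (idx k), E j) / (t (idx k + 1) - t (idx (k - 1) + 1))
        ≤ (∑ j ∈ Finset.Ioc (idx k) (idx (k + 1)), E j) / (t (idx (k + 1) + 1) - t (idx k + 1)) := by
  intro k hk
  obtain ⟨hk1, hk2⟩ := Finset.mem_Icc.mp hk
  have hk_mem : k ∈ Finset.Icc 1 ND := Finset.mem_Icc.mpr ⟨hk1, by omega⟩
  have hk_succ_mem : k + 1 ∈ Finset.Icc 1 ND := Finset.mem_Icc.mpr ⟨by omega, by omega⟩
  obtain ⟨hab, hbN⟩ := hidx_mono k hk_mem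
  obtain ⟨hbc, hcN⟩ := hidx_mono (k + 1) hk_succ_mem
  rw [Nat.add_sub_cancel] at hbc
  have hgap_pos : ∀ {m n : ℕ}, m < n → n ≤ N → 0 < t (n + 1) - t (m + 1) := fun hmn hn =>
    sub_pos.2 (htmono ⟨by omega, by omega⟩ ⟨by omega, by omega⟩ (by omega))
  apply div_le_div_of_div_le_add_div_add (hgap_pos hab hbN) (hgap_pos hbc hcN)
  rw [sub_add_sub_cancel']
  have hgreedy := hmin k hk_mem (idx (k + 1)) (hab.trans hbc) hcN
  rwa [← Finset.sum_Ioc_consecutive _ hab.le hbc.le] at hgreedy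

/-- Directional water-filling power levels are non-decreasing. The DWF indices
`idx 0 = 0 < idx 1 < ... < idx ND = N` are characterized by the iterative argmin
property (each `idx k` is the smallest index minimizing the prefix average power
over the remaining epochs); the resulting constant power levels are monotone. -/
theorem stmt2 (N ND : ℕ) (T : ℝ) (t : ℕ → ℝ) (E : ℕ → ℝ)
    (hN : 1 ≤ N) (hND : 1 ≤ ND)
    (ht1 : t 1 = 0) (htT : t (N + 1) = T)
    (htmono : StrictMonoOn t (Set.Icc 1 (N + 1)))
    (hE : ∀ i ∈ Finset.Icc 1 N, 0 < E i)
    (idx : ℕ → ℕ) (hidx0 : idx 0 = 0) (hidxND : idx ND = N)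
    (hidx_mono : ∀ k ∈ Finset.Icc 1 ND, idx (k - 1) < idx k ∧ idx k ≤ N)
    (hmin : ∀ k ∈ Finset.Icc 1 ND, ∀ i, idx (k - 1) < i → i ≤ N →
      (∑ j ∈ Finset.Ioc (idx (k - 1)) (idx k), E j) / (t (idx k + 1) - t (idx (k - 1) + 1))
        ≤ (∑ j ∈ Finset.Ioc (idx (k - 1)) i, E j) / (t (i + 1) - t (idx (k - 1) + 1)))
    (hleast : ∀ k ∈ Finset.Icc 1 ND, ∀ i, idx (k - 1) < i → i < idx k →
      (∑ j ∈ Finset.Ioc (idx (k - 1)) (idx k), E j) / (t (idx k + 1) - t (idx (k - 1) + 1))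
        < (∑ j ∈ Finset.Ioc (idx (k - 1)) i, E j) / (t (i + 1) - t (idx (k - 1) + 1))) :
    ∀ k ∈ Finset.Icc 1 (ND - 1),
      (∑ j ∈ Finset.Ioc (idx (k - 1)) (idx k), E j) / (t (idx k + 1) - t (idx (k - 1) + 1))
        ≤ (∑ j ∈ Finset.Ioc (idx k) (idx (k + 1)), E j) / (t (idx (k + 1) + 1) - t (idx k + 1)) :=
  stmt2_general N ND t E htmono idx hidx_mono hmin
end

section
/- The DWF power allocation is feasible with respect to the energy-neutrality constraint: with the DWF intervals and constant power levels P_k defined by the iterative argmin construction, the cumulative consumed energy up to any time t never exceeds the cumulative harvested energy E_Σ^EH(t). -/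
/-!
Up to the start `t (a + 1)` of the `k`-th DWF interval `(a, b]` the policy has spent exactly the
energy of the arrivals `1, …, a`. For `τ` inside the interval pick the arrival `j ∈ (a, b]` with
`t j ≤ τ ≤ t (j + 1)`. The minimality of the DWF power `P` over the candidate end points gives
`P * (t (j + 1) - t (a + 1)) ≤ E_{a+1} + ⋯ + E_j`, so the energy spent on the interval so far is
covered by the arrivals `a + 1, …, j`, all of which have been harvested by time `τ`.
-/

open Finset

theorem sum_Icc_sum_Ioc_telescope {M : Type*} [AddCommMonoid M] (f : ℕ → M) (idx : ℕ → ℕ)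
    (n : ℕ) (hidx : ∀ m < n, idx m ≤ idx (m + 1)) :
    ∑ m ∈ Icc 1 n, ∑ j ∈ Ioc (idx (m - 1)) (idx m), f j = ∑ j ∈ Ioc (idx 0) (idx n), f j := by
  induction n with
  | zero => simp
  | succ n ih =>
    have h0n : ∀ m ≤ n, idx 0 ≤ idx m := by
      intro m hm
      induction m with
      | zero => rfl
      | succ m ihm => exact (ihm (by omega)).trans (hidx m (by omega))
    rw [sum_Icc_succ_top (by omega), ih (fun m hm => hidx m (by omega)), Nat.add_sub_cancel,
      sum_Ioc_consecutive f (h0n n le_rfl) (hidx n (by omega))]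

theorem exists_mem_Ico_le_le_succ {α : Type*} [LinearOrder α] (f : ℕ → α) {u v : ℕ}
    (huv : u < v) {x : α} (hu : f u ≤ x) (hv : x ≤ f v) :
    ∃ j ∈ Ico u v, f j ≤ x ∧ x ≤ f (j + 1) := by
  induction v, huv using Nat.le_induction with
  | base => exact ⟨u, by simp, hu, hv⟩
  | succ v huv ih =>
    by_cases hxv : x ≤ f v
    · obtain ⟨j, hj, hfj⟩ := ih hxv
      exact ⟨j, Ico_subset_Ico_right v.le_succ hj, hfj⟩
    · exact ⟨v, mem_Ico.2 ⟨Nat.le_of_succ_le huv, v.lt_succ_self⟩, (not_le.1 hxv).le, hv⟩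

theorem sum_Icc_le_sum_filter_le {N j : ℕ} {t E : ℕ → ℝ} (ht : MonotoneOn t (Set.Icc 1 N))
    (hE : ∀ i ∈ Icc 1 N, 0 ≤ E i) (hjN : j ≤ N) {τ : ℝ} (hτ : t j ≤ τ) :
    ∑ i ∈ Icc 1 j, E i ≤ ∑ i ∈ (Icc 1 N).filter (fun i => t i ≤ τ), E i := by
  refine sum_le_sum_of_subset_of_nonneg (fun i hi => ?_)
    (fun i hi _ => hE i (filter_subset _ _ hi))
  obtain ⟨h1i, hij⟩ := mem_Icc.1 hi
  exact mem_filter.2 ⟨mem_Icc.2 ⟨h1i, hij.trans hjN⟩,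
    (ht ⟨h1i, hij.trans hjN⟩ ⟨h1i.trans hij, hjN⟩ hij).trans hτ⟩

theorem mul_sub_le_of_le_div_sub {P S s u τ : ℝ} (hP : 0 ≤ P) (hsu : s < u) (hτu : τ ≤ u)
    (hPS : P ≤ S / (u - s)) : P * (τ - s) ≤ S :=
  calc P * (τ - s) ≤ P * (u - s) := by gcongr
    _ ≤ S := (le_div_iff₀ (sub_pos.2 hsu)).1 hPS

theorem stmt3_general (N ND : ℕ) (t : ℕ → ℝ) (E : ℕ → ℝ)
    (htmono : StrictMonoOn t (Set.Icc 1 (N + 1)))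
    (hE : ∀ i ∈ Finset.Icc 1 N, 0 < E i)
    (idx : ℕ → ℕ) (hidx0 : idx 0 = 0)
    (hidx_mono : ∀ k ∈ Finset.Icc 1 ND, idx (k - 1) < idx k ∧ idx k ≤ N)
    (hmin : ∀ k ∈ Finset.Icc 1 ND, ∀ i, idx (k - 1) < i → i ≤ N →
      (∑ j ∈ Finset.Ioc (idx (k - 1)) (idx k), E j) / (t (idx k + 1) - t (idx (k - 1) + 1))
        ≤ (∑ j ∈ Finset.Ioc (idx (k - 1)) i, E j) / (t (i + 1) - t (idx (k - 1) + 1))) :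
    ∀ k ∈ Finset.Icc 1 ND, ∀ τ : ℝ,
      t (idx (k - 1) + 1) ≤ τ → τ ≤ t (idx k + 1) →
      (∑ m ∈ Finset.Icc 1 (k - 1), ∑ j ∈ Finset.Ioc (idx (m - 1)) (idx m), E j)
        + ((∑ j ∈ Finset.Ioc (idx (k - 1)) (idx k), E j)
            / (t (idx k + 1) - t (idx (k - 1) + 1))) * (τ - t (idx (k - 1) + 1))
      ≤ ∑ i ∈ (Finset.Icc 1 N).filter (fun i => t i ≤ τ), E i := by
  intro k hk τ hτa hτb
  obtain ⟨hk1, hkND⟩ := mem_Icc.1 hk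
  obtain ⟨hab, hbN⟩ := hidx_mono k hk
  have hE' : ∀ i ∈ Icc 1 N, 0 ≤ E i := fun i hi => (hE i hi).le
  have ht : MonotoneOn t (Set.Icc 1 (N + 1)) := htmono.monotoneOn
  obtain ⟨j, hj, htj, hτj⟩ :=
    exists_mem_Ico_le_le_succ t (by omega : idx (k - 1) + 1 < idx k + 1) hτa hτb
  obtain ⟨haj, hjb⟩ := mem_Ico.1 hj
  have hpast : ∑ m ∈ Icc 1 (k - 1), ∑ j ∈ Ioc (idx (m - 1)) (idx m), E j
      = ∑ i ∈ Ioc 0 (idx (k - 1)), E i := by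
    refine (sum_Icc_sum_Ioc_telescope E idx (k - 1) fun m hm => ?_).trans (by rw [hidx0])
    simpa using (hidx_mono (m + 1) (mem_Icc.2 ⟨by omega, by omega⟩)).1.le
  have hP : 0 ≤ (∑ j ∈ Ioc (idx (k - 1)) (idx k), E j) / (t (idx k + 1) - t (idx (k - 1) + 1)) :=
    div_nonneg (sum_nonneg fun i hi => hE' i (mem_Icc.2 (by grind)))
      (sub_nonneg.2 (ht ⟨by omega, by omega⟩ ⟨by omega, by omega⟩ (by omega)))
  have hcurrent := mul_sub_le_of_le_div_sub hP
    (htmono ⟨by omega, by omega⟩ ⟨by omega, by omega⟩ (by omega : idx (k - 1) + 1 < j + 1)) hτj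
    (hmin k hk j (by omega) (by omega))
  calc _ ≤ ∑ i ∈ Ioc 0 (idx (k - 1)), E i + ∑ i ∈ Ioc (idx (k - 1)) j, E i := by
        rw [hpast]; gcongr
    _ = ∑ i ∈ Icc 1 j, E i := by
        rw [sum_Ioc_consecutive E (Nat.zero_le _) (by omega), ← Icc_add_one_left_eq_Ioc, zero_add]
    _ ≤ _ := sum_Icc_le_sum_filter_le (ht.mono (Set.Icc_subset_Icc_right N.le_succ)) hE'
        (by omega) htj

/-- Energy-neutrality (feasibility) of the DWF allocation: the cumulative energy consumed
by the constant-power DWF policy up to any time `τ` in the `k`-th DWF interval never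
exceeds the cumulative harvested energy `E_Σ^EH(τ) = ∑_{i : t_i ≤ τ} E_i`. -/
theorem stmt3 (N ND : ℕ) (T : ℝ) (t : ℕ → ℝ) (E : ℕ → ℝ)
    (hN : 1 ≤ N) (hND : 1 ≤ ND)
    (ht1 : t 1 = 0) (htT : t (N + 1) = T)
    (htmono : StrictMonoOn t (Set.Icc 1 (N + 1)))
    (hE : ∀ i ∈ Finset.Icc 1 N, 0 < E i)
    (idx : ℕ → ℕ) (hidx0 : idx 0 = 0) (hidxND : idx ND = N)
    (hidx_mono : ∀ k ∈ Finset.Icc 1 ND, idx (k - 1) < idx k ∧ idx k ≤ N)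
    (hmin : ∀ k ∈ Finset.Icc 1 ND, ∀ i, idx (k - 1) < i → i ≤ N →
      (∑ j ∈ Finset.Ioc (idx (k - 1)) (idx k), E j) / (t (idx k + 1) - t (idx (k - 1) + 1))
        ≤ (∑ j ∈ Finset.Ioc (idx (k - 1)) i, E j) / (t (i + 1) - t (idx (k - 1) + 1)))
    (hleast : ∀ k ∈ Finset.Icc 1 ND, ∀ i, idx (k - 1) < i → i < idx k →
      (∑ j ∈ Finset.Ioc (idx (k - 1)) (idx k), E j) / (t (idx k + 1) - t (idx (k - 1) + 1))
        < (∑ j ∈ Finset.Ioc (idx (k - 1)) i, E j) / (t (i + 1) - t (idx (k - 1) + 1))) :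
    ∀ k ∈ Finset.Icc 1 ND, ∀ τ : ℝ,
      t (idx (k - 1) + 1) ≤ τ → τ ≤ t (idx k + 1) →
      (∑ m ∈ Finset.Icc 1 (k - 1), ∑ j ∈ Finset.Ioc (idx (m - 1)) (idx m), E j)
        + ((∑ j ∈ Finset.Ioc (idx (k - 1)) (idx k), E j)
            / (t (idx k + 1) - t (idx (k - 1) + 1))) * (τ - t (idx (k - 1) + 1))
      ≤ ∑ i ∈ (Finset.Icc 1 N).filter (fun i => t i ≤ τ), E i :=
  stmt3_general N ND t E htmono hE idx hidx0 hidx_mono hmin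
end

section
/- Monotonicity of the boundary function f_k⁻¹: fix T^D > 0 and E^D > 0, and let g be strictly concave, strictly increasing, continuous with g(0)=0. Then the function f⁻¹(T^S) = (T^D − T^S) · g⁻¹( (T^S/(T^D − T^S)) · g(E^D/T^S) ) is strictly increasing in T^S on (0, T^D). -/
open Set

/-!
The data delivered by the source, `T^S g(E^D/T^S)`, is the perspective of `g` and is strictly
increasing in `T^S`, because `g x / x` is strictly decreasing for a strictly concave `g` with
`g 0 = 0`. The relay energy needed to forward a fixed amount `D` of data in time `s`, namely
`s g⁻¹(D/s)`, equals `D · y / g y` with `y = g⁻¹(D/s)`, so it is strictly decreasing in `s`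
by the same slope argument. Increasing `T^S` raises the data and shortens the relay period, and
both effects raise `f⁻¹(T^S)`.
-/

lemma StrictConcaveOn.strictAntiOn_div_self {g : ℝ → ℝ} (hg : StrictConcaveOn ℝ (Ici 0) g)
    (hg0 : g 0 = 0) : StrictAntiOn (fun x => g x / x) (Ioi 0) := by
  intro x hx y hy hxy
  simpa [hg0] using hg.secant_strict_mono self_mem_Ici (Ioi_subset_Ici_self hx)
    (Ioi_subset_Ici_self hy) hx.ne' hy.ne' hxy

lemma StrictMonoOn.strictMonoOn_of_rightInvOn {α β : Type*} [LinearOrder α] [LinearOrder β]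
    {f : α → β} {h : β → α} {s : Set α} {t : Set β} (hf : StrictMonoOn f s)
    (hmaps : MapsTo h t s) (hinv : RightInvOn h f t) : StrictMonoOn h t := by
  intro x hx y hy hxy
  by_contra! hle
  have := (hf.le_iff_le (hmaps hy) (hmaps hx)).mpr hle
  rw [hinv hx, hinv hy] at this
  exact hxy.not_ge this

lemma strictMonoOn_perspective {g : ℝ → ℝ} (hg : StrictAntiOn (fun x => g x / x) (Ioi 0))
    {E : ℝ} (hE : 0 < E) : StrictMonoOn (fun t => t * g (E / t)) (Ioi 0) := by
  have hform : ∀ t : ℝ, 0 < t → t * g (E / t) = E * (g (E / t) / (E / t)) := by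
    intro t ht
    field_simp
  intro a ha b hb hab
  dsimp only
  rw [hform a ha, hform b hb]
  exact mul_lt_mul_of_pos_left
    (hg (div_pos hE hb) (div_pos hE ha) (div_lt_div_of_pos_left hE ha hab)) hE

lemma strictAntiOn_perspective_of_rightInvOn {g h : ℝ → ℝ}
    (hslope : StrictAntiOn (fun x => g x / x) (Ioi 0)) (hg : StrictMonoOn g (Ici 0))
    (hg0 : g 0 = 0) (hmaps : MapsTo h (Ici 0) (Ici 0)) (hinv : RightInvOn h g (Ici 0))
    {D : ℝ} (hD : 0 < D) : StrictAntiOn (fun s => s * h (D / s)) (Ioi 0) := by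
  have hpos : ∀ y : ℝ, 0 < y → 0 < h y := by
    intro y hy
    refine (hmaps hy.le).lt_of_ne fun h0 => hy.ne' ?_
    rw [← hinv hy.le, ← h0, hg0]
  have hform : ∀ s : ℝ, 0 < s → s * h (D / s) = D / (g (h (D / s)) / h (D / s)) := by
    intro s hs
    have hy0 := (hpos _ (div_pos hD hs)).ne'
    rw [hinv (div_pos hD hs).le]
    field_simp
  intro a ha b hb hab
  dsimp only
  rw [hform a ha, hform b hb]
  have hya := hpos _ (div_pos hD ha)
  have hyb := hpos _ (div_pos hD hb)
  have hy : h (D / b) < h (D / a) :=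
    hg.strictMonoOn_of_rightInvOn hmaps hinv (div_pos hD hb).le (div_pos hD ha).le
      (div_lt_div_of_pos_left hD ha hab)
  refine div_lt_div_of_pos_left hD ?_ (hslope hyb hya hy)
  rw [hinv (div_pos hD ha).le]
  exact div_pos (div_pos hD ha) hya

theorem stmt7_general (g ginv : ℝ → ℝ) (TD ED : ℝ)
    (hED : 0 < ED)
    (hg_concave : StrictConcaveOn ℝ (Ici 0) g)
    (hg_mono : StrictMonoOn g (Ici 0))
    (hg0 : g 0 = 0)
    (hginv_right : ∀ y ∈ Ici (0:ℝ), ginv y ∈ Ici (0:ℝ) ∧ g (ginv y) = y) :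
    StrictMonoOn
      (fun TS => (TD - TS) * ginv ((TS / (TD - TS)) * g (ED / TS)))
      (Ioo 0 TD) := by
  have hmaps : MapsTo ginv (Ici 0) (Ici 0) := fun y hy => (hginv_right y hy).1
  have hinv : RightInvOn ginv g (Ici 0) := fun y hy => (hginv_right y hy).2
  have hslope := hg_concave.strictAntiOn_div_self hg0
  intro a ⟨ha, haT⟩ b ⟨hb, hbT⟩ hab
  have hta : 0 < TD - a := by linarith
  have htb : 0 < TD - b := by linarith
  have hdata : a * g (ED / a) < b * g (ED / b) := strictMonoOn_perspective hslope hED ha hb hab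
  have hdata_pos : 0 < a * g (ED / a) := by
    have hg_pos := hg_mono self_mem_Ici (div_pos hED ha).le (div_pos hED ha)
    rw [hg0] at hg_pos
    positivity
  simp only [div_mul_eq_mul_div]
  calc (TD - a) * ginv (a * g (ED / a) / (TD - a))
      < (TD - b) * ginv (a * g (ED / a) / (TD - b)) :=
        strictAntiOn_perspective_of_rightInvOn hslope hg_mono hg0 hmaps hinv hdata_pos htb hta
          (by linarith)
    _ < (TD - b) * ginv (b * g (ED / b) / (TD - b)) := by
        refine mul_lt_mul_of_pos_left ?_ htb
        exact hg_mono.strictMonoOn_of_rightInvOn hmaps hinv (div_pos hdata_pos htb).le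
          (div_pos (hdata_pos.trans hdata) htb).le (div_lt_div_of_pos_right hdata htb)

/-- Monotonicity of the boundary function `f⁻¹`: with `T^D, E^D > 0` fixed and `g`
strictly concave, strictly increasing, continuous with `g 0 = 0`, the relay energy
`f⁻¹(T^S) = (T^D − T^S) · g⁻¹((T^S/(T^D − T^S)) · g(E^D/T^S))` required to balance the
data is strictly increasing in the source period `T^S` on `(0, T^D)`. -/
theorem stmt7 (g ginv : ℝ → ℝ) (TD ED : ℝ)
    (hTD : 0 < TD) (hED : 0 < ED)
    (hg_concave : StrictConcaveOn ℝ (Ici 0) g)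
    (hg_mono : StrictMonoOn g (Ici 0))
    (hg_cont : ContinuousOn g (Ici 0))
    (hg0 : g 0 = 0)
    (hginv_left : ∀ x ∈ Ici (0:ℝ), ginv (g x) = x)
    (hginv_right : ∀ y ∈ Ici (0:ℝ), ginv y ∈ Ici (0:ℝ) ∧ g (ginv y) = y) :
    StrictMonoOn
      (fun TS => (TD - TS) * ginv ((TS / (TD - TS)) * g (ED / TS)))
      (Ioo 0 TD) :=
  stmt7_general g ginv TD ED hED hg_concave hg_mono hg0 hginv_right
end

section
/- Half-duplex throughput upper bound in a single interval: consider a half-duplex two-hop link over an interval of length T^D with source energy budget E^D and relay peak power P_M^R, where at each instant only one of the source and relay transmits (P^S(t)·P^R(t)=0) and the delivered data is min(∫ g(P^S), ∫ g(P^R)). Then the delivered data is at most T^S* · g(E^D/T^S*) where T^S* ∈ (0,T^D) is the unique solution of T^S g(E^D/T^S) = (T^D − T^S) g(P_M^R), and this bound is achieved by the two-stage policy (source transmits at power E^D/T^S* for time T^S*, relay at P_M^R for time T^D − T^S*). -/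
/-!
Put `c = E^D / T^S*` and let `m` be a supergradient of the concave rate `g` at `c`. Weight the
source throughput by `g(P_M^R)` and the relay throughput by `g(c) - m c ≥ 0`. Since at each
instant one of the two powers vanishes, the supporting line at `c` and the peak constraint give
`g(P_M^R) g(P^S) + (g(c) - m c) g(P^R) ≤ g(P_M^R) (m P^S + g(c) - m c)` pointwise. Integrating,
the energy budget and the balance equation bound the weighted sum of the two throughputs by
`(g(P_M^R) + g(c) - m c) T^S* g(c)`, so their minimum is at most `T^S* g(c)`. Both throughputs
of the two-stage policy equal `T^S* g(c)`, again by the balance equation.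
-/

open MeasureTheory Set

theorem ConvexOn.exists_add_mul_sub_le {S : Set ℝ} {f : ℝ → ℝ} (hf : ConvexOn ℝ S f) {x : ℝ}
    (hx : x ∈ interior S) : ∃ m, ∀ y ∈ S, f x + m * (y - x) ≤ f y := by
  refine ⟨derivWithin f (Ioi x) x, fun y hy => ?_⟩
  rcases lt_trichotomy y x with hyx | rfl | hxy
  · have h := (hf.slope_le_leftDeriv_of_mem_interior hy hx hyx).trans
      (hf.leftDeriv_le_rightDeriv_of_mem_interior hx)
    rw [slope_def_field, div_le_iff₀ (sub_pos.2 hyx)] at h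
    linarith
  · simp
  · have h := hf.rightDeriv_le_slope_of_mem_interior hx hy hxy
    rw [slope_def_field, le_div_iff₀ (sub_pos.2 hxy)] at h
    linarith

theorem ConcaveOn.exists_le_add_mul_sub {S : Set ℝ} {f : ℝ → ℝ} (hf : ConcaveOn ℝ S f) {x : ℝ}
    (hx : x ∈ interior S) : ∃ m, ∀ y ∈ S, f y ≤ f x + m * (y - x) := by
  obtain ⟨m, hm⟩ := hf.neg.exists_add_mul_sub_le hx
  exact ⟨-m, fun y hy => by have := hm y hy; simp only [Pi.neg_apply] at this; linarith⟩

theorem intervalIntegral.integral_ite_lt {a b t u v : ℝ} (hat : a ≤ t) (htb : t ≤ b) :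
    ∫ s in a..b, (if s < t then u else v) = (t - a) * u + (b - t) * v := by
  set f : ℝ → ℝ := fun s => if s < t then u else v
  have hleft : EqOn f (fun _ => u) (Ioo a t) := fun s hs => if_pos hs.2
  have hright : EqOn f (fun _ => v) (Ioo t b) := fun s hs => if_neg hs.1.not_gt
  rw [← intervalIntegral.integral_add_adjacent_intervals
      ((intervalIntegrable_congr_uIoo (uIoo_of_le hat ▸ hleft)).2 intervalIntegrable_const)
      ((intervalIntegrable_congr_uIoo (uIoo_of_le htb ▸ hright)).2 intervalIntegrable_const),
    intervalIntegral.integral_congr_Ioo_of_le hat hleft,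
    intervalIntegral.integral_congr_Ioo_of_le htb hright]
  simp

section Supergradient

variable {g : ℝ → ℝ} {c m : ℝ}

theorem sub_mul_nonneg_of_supergradient (hg0 : g 0 = 0)
    (hsup : ∀ x ∈ Ici (0 : ℝ), g x ≤ g c + m * (x - c)) : 0 ≤ g c - m * c := by
  have := hsup 0 self_mem_Ici
  rw [hg0] at this
  linarith

theorem nonneg_of_supergradient (hmono : MonotoneOn g (Ici 0)) (hc : 0 ≤ c)
    (hsup : ∀ x ∈ Ici (0 : ℝ), g x ≤ g c + m * (x - c)) : 0 ≤ m := by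
  have h := hsup (c + 1) (by rw [mem_Ici]; linarith)
  have hgc : g c ≤ g (c + 1) := hmono hc (by rw [mem_Ici]; linarith) (by linarith)
  linarith

variable {p : ℝ}

theorem mul_add_mul_le_of_mul_eq_zero (hmono : MonotoneOn g (Ici 0)) (hg0 : g 0 = 0)
    (hsup : ∀ x ∈ Ici (0 : ℝ), g x ≤ g c + m * (x - c)) {a b : ℝ} (ha : 0 ≤ a) (hb : 0 ≤ b)
    (hab : a * b = 0) (hbp : b ≤ p) :
    g p * g a + (g c - m * c) * g b ≤ g p * (m * a + (g c - m * c)) := by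
  have hβ := sub_mul_nonneg_of_supergradient hg0 hsup
  rcases mul_eq_zero.1 hab with rfl | rfl
  · have hgb : g b ≤ g p := hmono hb (hb.trans hbp) hbp
    rw [hg0]
    nlinarith
  · have hgp : 0 ≤ g p := hg0 ▸ hmono self_mem_Ici hbp hbp
    rw [hg0]
    nlinarith [mul_le_mul_of_nonneg_left (hsup a ha) hgp]

theorem mul_integral_add_mul_integral_le (hmono : MonotoneOn g (Ici 0)) (hg0 : g 0 = 0)
    (hsup : ∀ x ∈ Ici (0 : ℝ), g x ≤ g c + m * (x - c)) {a b : ℝ} (hab : a ≤ b)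
    {PS PR : ℝ → ℝ} (hPS : ∀ s ∈ Icc a b, 0 ≤ PS s) (hPR : ∀ s ∈ Icc a b, 0 ≤ PR s)
    (hhd : ∀ s ∈ Icc a b, PS s * PR s = 0) (hpeak : ∀ s ∈ Icc a b, PR s ≤ p)
    (hPSint : IntervalIntegrable PS volume a b)
    (hgPSint : IntervalIntegrable (fun s => g (PS s)) volume a b)
    (hgPRint : IntervalIntegrable (fun s => g (PR s)) volume a b) :
    g p * (∫ s in a..b, g (PS s)) + (g c - m * c) * ∫ s in a..b, g (PR s)
      ≤ g p * (m * (∫ s in a..b, PS s) + (b - a) * (g c - m * c)) := by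
  have h := intervalIntegral.integral_mono_on hab
    ((hgPSint.const_mul (g p)).add (hgPRint.const_mul (g c - m * c)))
    (((hPSint.const_mul m).add intervalIntegrable_const).const_mul (g p))
    fun s hs => mul_add_mul_le_of_mul_eq_zero hmono hg0 hsup (hPS s hs) (hPR s hs) (hhd s hs)
      (hpeak s hs)
  rwa [intervalIntegral.integral_add (hgPSint.const_mul _) (hgPRint.const_mul _),
    intervalIntegral.integral_const_mul, intervalIntegral.integral_const_mul,
    intervalIntegral.integral_const_mul,
    intervalIntegral.integral_add (hPSint.const_mul _) intervalIntegrable_const,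
    intervalIntegral.integral_const_mul, intervalIntegral.integral_const, smul_eq_mul] at h

end Supergradient

theorem min_le_of_mul_add_mul_le {x y α β B : ℝ} (hα : 0 ≤ α) (hβ : 0 ≤ β) (hαβ : 0 < α + β)
    (h : α * x + β * y ≤ (α + β) * B) : min x y ≤ B := by
  by_contra! hlt
  nlinarith [mul_pos hαβ (sub_pos.2 hlt), mul_le_mul_of_nonneg_left (min_le_left x y) hα,
    mul_le_mul_of_nonneg_left (min_le_right x y) hβ]

theorem stmt9_general (g : ℝ → ℝ) (TD ED PMR TSstar : ℝ)
    (hg_concave : StrictConcaveOn ℝ (Ici 0) g)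
    (hg_mono : StrictMonoOn g (Ici 0))
    (hg0 : g 0 = 0)
    (hTD : 0 < TD) (hED : 0 < ED) (hPMR : 0 < PMR)
    (hTS : TSstar ∈ Ioo 0 TD)
    (hbal : TSstar * g (ED / TSstar) = (TD - TSstar) * g PMR)
    (PS PR : ℝ → ℝ)
    (hPSnonneg : ∀ s ∈ Icc (0:ℝ) TD, 0 ≤ PS s)
    (hPRnonneg : ∀ s ∈ Icc (0:ℝ) TD, 0 ≤ PR s)
    (hhd : ∀ s ∈ Icc (0:ℝ) TD, PS s * PR s = 0)
    (hPSint : IntervalIntegrable PS volume 0 TD)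
    (hgPSint : IntervalIntegrable (fun s => g (PS s)) volume 0 TD)
    (hgPRint : IntervalIntegrable (fun s => g (PR s)) volume 0 TD)
    (henergy : (∫ s in (0:ℝ)..TD, PS s) ≤ ED)
    (hpeak : ∀ s ∈ Icc (0:ℝ) TD, PR s ≤ PMR) :
    min (∫ s in (0:ℝ)..TD, g (PS s)) (∫ s in (0:ℝ)..TD, g (PR s))
        ≤ TSstar * g (ED / TSstar) ∧
    min (∫ s in (0:ℝ)..TD, g (if s < TSstar then ED / TSstar else 0))
        (∫ s in (0:ℝ)..TD, g (if s < TSstar then 0 else PMR))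
      = TSstar * g (ED / TSstar) := by
  obtain ⟨hTS0, hTSD⟩ := hTS
  set c := ED / TSstar
  have hc : 0 < c := div_pos hED hTS0
  have hmono := hg_mono.monotoneOn
  obtain ⟨m, hsup⟩ := hg_concave.concaveOn.exists_le_add_mul_sub (x := c) (by rwa [interior_Ici])
  have hm := nonneg_of_supergradient hmono hc.le hsup
  have hβ := sub_mul_nonneg_of_supergradient hg0 hsup
  have hP : 0 < g PMR := hg0 ▸ hg_mono self_mem_Ici hPMR.le hPMR
  have hweighted := mul_integral_add_mul_integral_le hmono hg0 hsup hTD.le hPSnonneg hPRnonneg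
    hhd hpeak hPSint hgPSint hgPRint
  rw [sub_zero] at hweighted
  rw [show ED = c * TSstar from (div_mul_cancel₀ ED hTS0.ne').symm] at henergy
  refine ⟨min_le_of_mul_add_mul_le hP.le hβ (by linarith) (hweighted.trans ?_), ?_⟩
  · calc g PMR * (m * (∫ s in (0:ℝ)..TD, PS s) + TD * (g c - m * c))
        ≤ g PMR * (m * (c * TSstar) + TD * (g c - m * c)) := by gcongr
      _ = (g PMR + (g c - m * c)) * (TSstar * g c) := by linear_combination -(g c - m * c) * hbal
  · simp only [apply_ite g, hg0]
    rw [intervalIntegral.integral_ite_lt hTS0.le hTSD.le,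
      intervalIntegral.integral_ite_lt hTS0.le hTSD.le, ← hbal]
    simp

/-- Half-duplex throughput upper bound in a single interval: for any feasible half-duplex
policy `(P^S, P^R)` with source energy `E^D` and relay peak power `P_M^R`, the delivered
data `min(∫ g(P^S), ∫ g(P^R))` is at most `T^S* · g(E^D/T^S*)`, where `T^S*` solves the
balance equation; the two-stage policy (source at `E^D/T^S*` for time `T^S*`, then relay
at `P_M^R`) achieves this bound. -/
theorem stmt9 (g : ℝ → ℝ) (TD ED PMR TSstar : ℝ)
    (hg_concave : StrictConcaveOn ℝ (Ici 0) g)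
    (hg_mono : StrictMonoOn g (Ici 0))
    (hg_cont : ContinuousOn g (Ici 0))
    (hg0 : g 0 = 0)
    (hTD : 0 < TD) (hED : 0 < ED) (hPMR : 0 < PMR)
    (hTS : TSstar ∈ Ioo 0 TD)
    (hbal : TSstar * g (ED / TSstar) = (TD - TSstar) * g PMR)
    (PS PR : ℝ → ℝ) (hPSmeas : Measurable PS) (hPRmeas : Measurable PR)
    (hPSnonneg : ∀ s ∈ Icc (0:ℝ) TD, 0 ≤ PS s)
    (hPRnonneg : ∀ s ∈ Icc (0:ℝ) TD, 0 ≤ PR s)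
    (hhd : ∀ s ∈ Icc (0:ℝ) TD, PS s * PR s = 0)
    (hPSint : IntervalIntegrable PS volume 0 TD)
    (hgPSint : IntervalIntegrable (fun s => g (PS s)) volume 0 TD)
    (hgPRint : IntervalIntegrable (fun s => g (PR s)) volume 0 TD)
    (henergy : (∫ s in (0:ℝ)..TD, PS s) ≤ ED)
    (hpeak : ∀ s ∈ Icc (0:ℝ) TD, PR s ≤ PMR) :
    min (∫ s in (0:ℝ)..TD, g (PS s)) (∫ s in (0:ℝ)..TD, g (PR s))
        ≤ TSstar * g (ED / TSstar) ∧
    min (∫ s in (0:ℝ)..TD, g (if s < TSstar then ED / TSstar else 0))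
        (∫ s in (0:ℝ)..TD, g (if s < TSstar then 0 else PMR))
      = TSstar * g (ED / TSstar) :=
  stmt9_general g TD ED PMR TSstar hg_concave hg_mono hg0 hTD hED hPMR hTS hbal PS PR hPSnonneg
    hPRnonneg hhd hPSint hgPSint hgPRint henergy hpeak
end

section
/- Strict concavity of per-interval throughput in the relay energy: with T^D, E^D fixed and g strictly concave, strictly increasing, twice differentiable with g(0)=0, the function D(E^R) = (T^D − f(E^R)) · g( E^R / (T^D − f(E^R)) ), where T^S = f(E^R) is implicitly defined by T^S g(E^D/T^S) = (T^D − T^S) g(E^R/(T^D − T^S)), is strictly concave in E^R on its domain. -/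
open Set

/-!
Write `P(u, E) = u g(E/u)` for the perspective of `g`; it is jointly concave, strictly so
along pairs `(u, E)` with different ratios `E/u`, and for `E > 0` it is strictly increasing
in `u`. The balance equation says that `t = f(E^R)` is where the increasing curve
`A(t) = P(t, E^D)` meets the decreasing curve `B(t) = P(T^D − t, E^R)`, and `D(E^R)` is their
common value there. For a convex combination `E = a x + b y`, joint concavity shows that at
`t = a f(x) + b f(y)` both `A(t)` and `B(t)` are at least `c = a D(x) + b D(y)`, one of them
strictly. Wherever the crossing point lies relative to `t`, the monotone curve on that side
then exceeds `c` at the crossing, i.e. `D(E) > c`.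
-/

noncomputable def perspective (g : ℝ → ℝ) (u E : ℝ) : ℝ := u * g (E / u)

section Perspective

variable {s : Set ℝ} {g : ℝ → ℝ} {u₁ u₂ E₁ E₂ a b : ℝ}

lemma perspective_combination_eq (hu₁ : 0 < u₁) (hu₂ : 0 < u₂) (ha : 0 < a) (hb : 0 < b) :
    a * perspective g u₁ E₁ + b * perspective g u₂ E₂ =
      (a * u₁ + b * u₂) * ((a * u₁ / (a * u₁ + b * u₂)) • g (E₁ / u₁) +
        (b * u₂ / (a * u₁ + b * u₂)) • g (E₂ / u₂)) := by
  have : 0 < a * u₁ + b * u₂ := by positivity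
  simp only [perspective, smul_eq_mul]
  field_simp

lemma perspective_weights_add (hu₁ : 0 < u₁) (hu₂ : 0 < u₂) (ha : 0 < a) (hb : 0 < b) :
    a * u₁ / (a * u₁ + b * u₂) + b * u₂ / (a * u₁ + b * u₂) = 1 := by
  rw [← add_div, div_self (by positivity)]

lemma perspective_weights_smul_add (hu₁ : 0 < u₁) (hu₂ : 0 < u₂) (ha : 0 < a) (hb : 0 < b) :
    (a * u₁ / (a * u₁ + b * u₂)) • (E₁ / u₁) + (b * u₂ / (a * u₁ + b * u₂)) • (E₂ / u₂) =
      (a * E₁ + b * E₂) / (a * u₁ + b * u₂) := by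
  have : 0 < a * u₁ + b * u₂ := by positivity
  simp only [smul_eq_mul]
  field_simp

lemma ConcaveOn.perspective_combination_le (hg : ConcaveOn ℝ s g) (hu₁ : 0 < u₁)
    (hu₂ : 0 < u₂) (h₁ : E₁ / u₁ ∈ s) (h₂ : E₂ / u₂ ∈ s) (ha : 0 < a) (hb : 0 < b) :
    a * perspective g u₁ E₁ + b * perspective g u₂ E₂ ≤
      perspective g (a * u₁ + b * u₂) (a * E₁ + b * E₂) := by
  rw [perspective_combination_eq hu₁ hu₂ ha hb, perspective,
    ← perspective_weights_smul_add hu₁ hu₂ ha hb]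
  exact mul_le_mul_of_nonneg_left (hg.2 h₁ h₂ (by positivity) (by positivity)
    (perspective_weights_add hu₁ hu₂ ha hb)) (by positivity)

lemma StrictConcaveOn.perspective_combination_lt (hg : StrictConcaveOn ℝ s g)
    (hu₁ : 0 < u₁) (hu₂ : 0 < u₂) (h₁ : E₁ / u₁ ∈ s) (h₂ : E₂ / u₂ ∈ s)
    (hne : E₁ / u₁ ≠ E₂ / u₂) (ha : 0 < a) (hb : 0 < b) :
    a * perspective g u₁ E₁ + b * perspective g u₂ E₂ <
      perspective g (a * u₁ + b * u₂) (a * E₁ + b * E₂) := by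
  rw [perspective_combination_eq hu₁ hu₂ ha hb, perspective,
    ← perspective_weights_smul_add hu₁ hu₂ ha hb]
  exact mul_lt_mul_of_pos_left (hg.2 h₁ h₂ hne (by positivity) (by positivity)
    (perspective_weights_add hu₁ hu₂ ha hb)) (by positivity)

-- For `u < t`, `E/t` is a convex combination of `E/u` and `0` with weights `u/t`, `1 - u/t`.
lemma StrictConcaveOn.strictMonoOn_perspective (hg : StrictConcaveOn ℝ (Ici 0) g)
    (hg0 : 0 ≤ g 0) {E : ℝ} (hE : 0 < E) :
    StrictMonoOn (fun u => perspective g u E) (Ioi 0) := by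
  intro u (hu : 0 < u) t (ht : 0 < t) hut
  have hlt := hg.2 (mem_Ici.2 (div_pos hE hu).le) (mem_Ici.2 le_rfl) (div_pos hE hu).ne'
    (div_pos hu ht) (sub_pos.2 ((div_lt_one ht).2 hut)) (add_sub_cancel _ _)
  have harg : (u / t) • (E / u) + (1 - u / t) • (0 : ℝ) = E / t := by
    simp only [smul_eq_mul, mul_zero, add_zero]
    field_simp
  rw [harg, smul_eq_mul, smul_eq_mul] at hlt
  have hscaled := mul_lt_mul_of_pos_left hlt ht
  simp only [perspective]
  calc u * g (E / u) ≤ u * g (E / u) + (t - u) * g 0 :=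
        le_add_of_nonneg_right (mul_nonneg (sub_nonneg.2 hut.le) hg0)
    _ = t * (u / t * g (E / u) + (1 - u / t) * g 0) := by field_simp
    _ < t * g (E / t) := hscaled

lemma StrictConcaveOn.strictAntiOn_perspective_sub (hg : StrictConcaveOn ℝ (Ici 0) g)
    (hg0 : 0 ≤ g 0) {E : ℝ} (hE : 0 < E) (T : ℝ) :
    StrictAntiOn (fun t => perspective g (T - t) E) (Iio T) :=
  fun _ ht _ hs hts => hg.strictMonoOn_perspective hg0 hE (mem_Ioi.2 (sub_pos.2 hs))
    (mem_Ioi.2 (sub_pos.2 ht)) (sub_lt_sub_left hts T)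

end Perspective

lemma StrictMonoOn.lt_of_eq_of_strictAntiOn {S : Set ℝ} {A B : ℝ → ℝ} {s t c : ℝ}
    (hA : StrictMonoOn A S) (hB : StrictAntiOn B S) (hs : s ∈ S) (ht : t ∈ S)
    (hcross : A t = B t) (hAs : c ≤ A s) (hBs : c ≤ B s) (hstrict : c < A s ∨ c < B s) :
    c < A t := by
  rcases lt_trichotomy s t with hst | rfl | hts
  · exact hAs.trans_lt (hA hs ht hst)
  · exact hstrict.elim id (fun h => hcross ▸ h)
  · exact hcross ▸ hBs.trans_lt (hB ht hs hts)

lemma StrictConcaveOn.balanced_combination_le_perspective (hg : StrictConcaveOn ℝ (Ici 0) g)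
    {T E₀ x y t₁ t₂ a b : ℝ} (hE₀ : 0 < E₀) (hx : 0 ≤ x) (hy : 0 ≤ y) (hxy : x ≠ y)
    (ht₁ : t₁ ∈ Ioo 0 T) (ht₂ : t₂ ∈ Ioo 0 T)
    (hbal₁ : perspective g t₁ E₀ = perspective g (T - t₁) x)
    (hbal₂ : perspective g t₂ E₀ = perspective g (T - t₂) y)
    (ha : 0 < a) (hb : 0 < b) (hab : a + b = 1) :
    (a * perspective g (T - t₁) x + b * perspective g (T - t₂) y ≤
        perspective g (a * t₁ + b * t₂) E₀ ∧
      a * perspective g (T - t₁) x + b * perspective g (T - t₂) y ≤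
        perspective g (T - (a * t₁ + b * t₂)) (a * x + b * y)) ∧
    (a * perspective g (T - t₁) x + b * perspective g (T - t₂) y <
        perspective g (a * t₁ + b * t₂) E₀ ∨
      a * perspective g (T - t₁) x + b * perspective g (T - t₂) y <
        perspective g (T - (a * t₁ + b * t₂)) (a * x + b * y)) := by
  obtain ⟨ht₁₀, ht₁T⟩ := ht₁
  obtain ⟨ht₂₀, ht₂T⟩ := ht₂
  have hs₁ : 0 < T - t₁ := sub_pos.2 ht₁T
  have hs₂ : 0 < T - t₂ := sub_pos.2 ht₂T
  have hmem : ∀ {u E : ℝ}, 0 < u → 0 ≤ E → E / u ∈ Ici (0 : ℝ) := fun hu hE =>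
    div_nonneg hE hu.le
  have hE₀_comb : a * E₀ + b * E₀ = E₀ := by linear_combination E₀ * hab
  have hT_comb : a * (T - t₁) + b * (T - t₂) = T - (a * t₁ + b * t₂) := by
    linear_combination T * hab
  set c := a * perspective g (T - t₁) x + b * perspective g (T - t₂) y
  have hc : c = a * perspective g t₁ E₀ + b * perspective g t₂ E₀ := by rw [hbal₁, hbal₂]
  refine ⟨⟨?_, hT_comb ▸ hg.concaveOn.perspective_combination_le hs₁ hs₂ (hmem hs₁ hx)
    (hmem hs₂ hy) ha hb⟩, ?_⟩
  · simpa only [hc, hE₀_comb] using hg.concaveOn.perspective_combination_le ht₁₀ ht₂₀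
      (hmem ht₁₀ hE₀.le) (hmem ht₂₀ hE₀.le) ha hb
  rcases eq_or_ne t₁ t₂ with rfl | ht_ne
  · exact .inr (hT_comb ▸ hg.perspective_combination_lt hs₁ hs₂ (hmem hs₁ hx) (hmem hs₂ hy)
      ((div_left_inj' hs₁.ne').not.2 hxy) ha hb)
  · have hne : E₀ / t₁ ≠ E₀ / t₂ := by simpa [div_eq_mul_inv, hE₀.ne'] using ht_ne
    left
    simpa only [hc, hE₀_comb] using hg.perspective_combination_lt ht₁₀ ht₂₀
      (hmem ht₁₀ hE₀.le) (hmem ht₂₀ hE₀.le) hne ha hb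

theorem stmt10_general (g : ℝ → ℝ) (TD ED : ℝ)
    (hED : 0 < ED)
    (hg_concave : StrictConcaveOn ℝ (Ici 0) g)
    (hg0 : g 0 = 0)
    (f : ℝ → ℝ)
    (hf : ∀ ER ∈ Ioi (0:ℝ), f ER ∈ Ioo 0 TD ∧
      f ER * g (ED / f ER) = (TD - f ER) * g (ER / (TD - f ER))) :
    StrictConcaveOn ℝ (Ioi 0)
      (fun ER => (TD - f ER) * g (ER / (TD - f ER))) := by
  have hbal : ∀ ER ∈ Ioi (0:ℝ), perspective g (f ER) ED = perspective g (TD - f ER) ER :=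
    fun ER hER => (hf ER hER).2
  refine ⟨convex_Ioi 0, fun x (hx : 0 < x) y (hy : 0 < y) hxy a b ha hb hab => ?_⟩
  have hE : 0 < a * x + b * y := by positivity
  obtain ⟨⟨hA, hB⟩, hstrict⟩ := hg_concave.balanced_combination_le_perspective hED hx.le hy.le hxy
    (hf x hx).1 (hf y hy).1 (hbal x hx) (hbal y hy) ha hb hab
  have ht : a * f x + b * f y ∈ Ioo 0 TD :=
    convex_Ioo 0 TD (hf x hx).1 (hf y hy).1 ha.le hb.le hab
  change _ < perspective g (TD - f (a * x + b * y)) (a * x + b * y)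
  rw [← hbal _ hE]
  exact (hg_concave.strictMonoOn_perspective hg0.ge hED).mono Ioo_subset_Ioi_self
    |>.lt_of_eq_of_strictAntiOn
      ((hg_concave.strictAntiOn_perspective_sub hg0.ge hE TD).mono Ioo_subset_Iio_self)
      ht (hf _ hE).1 (hbal _ hE) hA hB hstrict

/-- Strict concavity of the per-interval throughput in the relay energy: with `T^D, E^D`
fixed, and `T^S = f(E^R)` implicitly defined by the data-balance equation
`T^S g(E^D/T^S) = (T^D − T^S) g(E^R/(T^D − T^S))`, the delivered data
`D(E^R) = (T^D − f(E^R)) · g(E^R/(T^D − f(E^R)))` is strictly concave in `E^R`. -/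
theorem stmt10 (g : ℝ → ℝ) (TD ED : ℝ)
    (hTD : 0 < TD) (hED : 0 < ED)
    (hg_concave : StrictConcaveOn ℝ (Ici 0) g)
    (hg_mono : StrictMonoOn g (Ici 0))
    (hg_smooth : ContDiff ℝ 2 g)
    (hg0 : g 0 = 0)
    (f : ℝ → ℝ)
    (hf : ∀ ER ∈ Ioi (0:ℝ), f ER ∈ Ioo 0 TD ∧
      f ER * g (ED / f ER) = (TD - f ER) * g (ER / (TD - f ER))) :
    StrictConcaveOn ℝ (Ioi 0)
      (fun ER => (TD - f ER) * g (ER / (TD - f ER))) :=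
  stmt10_general g TD ED hED hg_concave hg0 f hf
end
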